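/- Central property of the subset construction (infinite case, via König's Lemma): in a deterministic game with finite state space, for every infinite sequence of selectors α₁, α₂, … and the induced infinite path s₁, s₂, … with s_{i+1} = δ_{α_i}(s_i) and s₁ nonempty, there exists an infinite sequence of states q₁, q₂, … and actions b₁, b₂, … such that q_i ∈ s_i and q_{i+1} = δ(q_i, α_i(q_i), b_i) for all i ≥ 1. -/
import Mathlib

/-- The one-step successor operator of the subset construction of a deterministic
game `δ : Q → A → A → Q` under a selector `α : Q → A`:
`δ_α(s) = { δ q (α q) b | q ∈ s, b ∈ A }`. -/
def detPost {Q A : Type} (δ : Q → A → A → Q) (α : Q → A) (s : Set Q) : Set Q :=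
  {q' | ∃ q ∈ s, ∃ b : A, q' = δ q (α q) b}

/-- central property of the subset construction (infinite case, via
König's lemma). In a deterministic game with finite state space, for every infinite
sequence of selectors `α` and induced infinite path `s` of the subset construction
with `s 0` nonempty, there is an infinite play `qs` with `qs i ∈ s i` and
`qs (i+1) = δ (qs i) (α i (qs i)) (bs i)` for all `i`. -/
theorem subset_construction_central_infinite {Q A : Type} [Fintype Q] [Nonempty A]
    (δ : Q → A → A → Q) (α : ℕ → Q → A) (s : ℕ → Set Q)
    (h0 : (s 0).Nonempty)
    (hs : ∀ i, s (i + 1) = detPost δ (α i) (s i)) :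
    ∃ (qs : ℕ → Q) (bs : ℕ → A),
      ∀ i, qs i ∈ s i ∧ qs (i + 1) = δ (qs i) (α i (qs i)) (bs i) := by
  obtain ⟨q0, hq0⟩ := h0
  obtain ⟨b0⟩ := ‹Nonempty A›
  let qs : ℕ → Q := fun n => Nat.rec q0 (fun i q => δ q (α i q) b0) n
  have hmem : ∀ i, qs i ∈ s i := by
    intro i
    induction i with
    | zero => exact hq0
    | succ n ih => rw [hs n]; exact ⟨qs n, ih, b0, rfl⟩
  exact ⟨qs, fun _ => b0, fun i => ⟨hmem i, rfl⟩⟩
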